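/- arXiv:2212.04032 — 2 statements merged into one kernel-verified Lean document; each statement's English description precedes it below -/
import Mathlib

section
/- Let μ ∈ ℤ^n, C = {a_1 < ··· < a_m} ⊆ {1,...,n} nonempty, j = a_p ∈ C. With A' = Σ_{i∈{2,...,m}, μ_{a_{i-1}} > μ_{a_i}} (μ_{a_{i-1}} - μ_{a_i}) + max(μ_{a_1} - (μ_{a_m}+1), 0), define A_{j,μ}(C) = A' + (μ_{a_{p-1}} - μ_{a_1}) if p ≠ 1 and μ_{a_p} ≥ μ_{a_{p-1}}; A' + (μ_{a_p} - μ_{a_1}) if p ≠ 1 and μ_{a_p} < μ_{a_{p-1}}; A' - (μ_{a_1} - (μ_{a_m}+1)) if p = 1 and μ_{a_m}+1 ≤ μ_{a_1}; and A' if p = 1 and μ_{a_m}+1 > μ_{a_1}. Then A_{j,μ}(C) ≥ 0. -/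
open Finset

private lemma A_partial_sum_ge (b : ℕ → ℤ) :
    ∀ k, b 0 - b k ≤ ∑ i ∈ range (k + 1), (if 0 < i then max (b (i - 1) - b i) 0 else 0) := by
  intro k
  induction k with
  | zero => simp
  | succ k ih =>
    rw [Finset.sum_range_succ]
    have h2 : (if 0 < k + 1 then max (b (k + 1 - 1) - b (k + 1)) 0 else 0)
        = max (b k - b (k + 1)) 0 := by simp
    rw [h2]
    have := le_max_left (b k - b (k + 1)) (0 : ℤ)
    omega

private lemma A_full_sum_ge (b : ℕ → ℤ) (m k : ℕ) (hk : k < m) :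
    b 0 - b k ≤ ∑ i ∈ range m, (if 0 < i then max (b (i - 1) - b i) 0 else 0) := by
  refine le_trans (A_partial_sum_ge b k) ?_
  apply Finset.sum_le_sum_of_subset_of_nonneg
  · exact Finset.range_subset_range.2 hk
  · intro i _ _
    have := le_max_right (b (i - 1) - b i) (0 : ℤ)
    split <;> omega

/-- nonnegativity of the statistic `A_{j,μ}(C)`.
Here `C = {a_1 < ⋯ < a_m}` is encoded (0-indexed) by a strictly monotone map
`a : Fin m → Fin n`, and `j = a_p`. -/
theorem A_stat_nonneg (n m : ℕ) (hm : 0 < m) (μ : Fin n → ℤ)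
    (a : Fin m → Fin n) (ha : StrictMono a) (p : Fin m) :
    let a0 : Fin m := ⟨0, hm⟩
    let alast : Fin m := ⟨m - 1, Nat.sub_lt hm one_pos⟩
    let A' : ℤ :=
      (∑ i : Fin m, if 0 < (i : ℕ) then
        (if μ (a ⟨(i : ℕ) - 1, lt_of_le_of_lt (Nat.sub_le _ _) i.isLt⟩) > μ (a i) then
          μ (a ⟨(i : ℕ) - 1, lt_of_le_of_lt (Nat.sub_le _ _) i.isLt⟩) - μ (a i) else 0)
        else 0)
      + max (μ (a a0) - (μ (a alast) + 1)) 0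
    let A : ℤ := A' +
      (if hp : 0 < (p : ℕ) then
        (if μ (a p) ≥ μ (a ⟨(p : ℕ) - 1, lt_of_le_of_lt (Nat.sub_le _ _) p.isLt⟩) then
          μ (a ⟨(p : ℕ) - 1, lt_of_le_of_lt (Nat.sub_le _ _) p.isLt⟩) - μ (a a0)
        else μ (a p) - μ (a a0))
      else
        (if μ (a alast) + 1 ≤ μ (a a0) then -(μ (a a0) - (μ (a alast) + 1)) else 0))
    0 ≤ A := by
  intro a0 alast A' A
  set b : ℕ → ℤ := fun i => if h : i < m then μ (a ⟨i, h⟩) else 0 with hb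
  have hbi : ∀ (i : Fin m), b (i : ℕ) = μ (a i) := by
    intro i; simp [hb, i.isLt]
  have hsum : (∑ i : Fin m, if 0 < (i : ℕ) then
        (if μ (a ⟨(i : ℕ) - 1, lt_of_le_of_lt (Nat.sub_le _ _) i.isLt⟩) > μ (a i) then
          μ (a ⟨(i : ℕ) - 1, lt_of_le_of_lt (Nat.sub_le _ _) i.isLt⟩) - μ (a i) else 0)
        else 0)
      = ∑ i ∈ range m, (if 0 < i then max (b (i - 1) - b i) 0 else 0) := by
    rw [← Fin.sum_univ_eq_sum_range]
    apply Finset.sum_congr rfl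
    intro i _
    by_cases hi : 0 < (i : ℕ)
    · rw [if_pos hi, if_pos hi]
      have h1 : b ((i : ℕ) - 1) = μ (a ⟨(i : ℕ) - 1, lt_of_le_of_lt (Nat.sub_le _ _) i.isLt⟩) := by
        simp [hb, lt_of_le_of_lt (Nat.sub_le (i : ℕ) 1) i.isLt]
      rw [h1, hbi, max_def]
      split_ifs <;> omega
    · rw [if_neg hi, if_neg hi]
  have hS : ∀ k : ℕ, k < m → μ (a a0) - b k ≤
      (∑ i : Fin m, if 0 < (i : ℕ) then
        (if μ (a ⟨(i : ℕ) - 1, lt_of_le_of_lt (Nat.sub_le _ _) i.isLt⟩) > μ (a i) then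
          μ (a ⟨(i : ℕ) - 1, lt_of_le_of_lt (Nat.sub_le _ _) i.isLt⟩) - μ (a i) else 0)
        else 0) := by
    intro k hk
    rw [hsum]
    have := A_full_sum_ge b m k hk
    have h0 : b 0 = μ (a a0) := hbi a0
    omega
  have hS0 : (0:ℤ) ≤ (∑ i : Fin m, if 0 < (i : ℕ) then
        (if μ (a ⟨(i : ℕ) - 1, lt_of_le_of_lt (Nat.sub_le _ _) i.isLt⟩) > μ (a i) then
          μ (a ⟨(i : ℕ) - 1, lt_of_le_of_lt (Nat.sub_le _ _) i.isLt⟩) - μ (a i) else 0)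
        else 0) := by
    have := hS 0 hm
    have h0 : b 0 = μ (a a0) := hbi a0
    omega
  show (0:ℤ) ≤ A' + _
  have hmax := le_max_left (μ (a a0) - (μ (a alast) + 1)) (0:ℤ)
  have hmax0 := le_max_right (μ (a a0) - (μ (a alast) + 1)) (0:ℤ)
  by_cases hp : 0 < (p : ℕ)
  · rw [dif_pos hp]
    have hp1 : (p : ℕ) - 1 < m := lt_of_le_of_lt (Nat.sub_le _ _) p.isLt
    have hbp1 : b ((p : ℕ) - 1) = μ (a ⟨(p : ℕ) - 1, hp1⟩) := by simp [hb, hp1]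
    have hbp : b (p : ℕ) = μ (a p) := hbi p
    by_cases hcase : μ (a p) ≥ μ (a ⟨(p : ℕ) - 1, lt_of_le_of_lt (Nat.sub_le _ _) p.isLt⟩)
    · rw [if_pos hcase]
      have := hS ((p : ℕ) - 1) hp1
      simp only [A']
      omega
    · rw [if_neg hcase]
      have := hS (p : ℕ) p.isLt
      simp only [A']
      omega
  · rw [dif_neg hp]
    by_cases hcase : μ (a alast) + 1 ≤ μ (a a0)
    · rw [if_pos hcase]
      simp only [A']
      have hmx : max (μ (a a0) - (μ (a alast) + 1)) 0 = μ (a a0) - (μ (a alast) + 1) := by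
        rw [max_def]; split_ifs <;> omega
      omega
    · rw [if_neg hcase]
      simp only [A']
      omega
end

section
/- For μ ∈ ℤ_{≥0}^n, define u_μ(r,c) = #{r' ∈ {1,...,r-1} : μ_{r'} < c ≤ μ_r} + #{r' ∈ {r+1,...,n} : μ_{r'} < c-1 < μ_r} for each box (r,c) with 1 ≤ r ≤ n and 1 ≤ c ≤ μ_r. Then Σ_{(r,c)∈μ} u_μ(r,c) = Σ_{1≤i<j≤n} max(|μ_i - μ_j| - 1, 0) + #{(i,j) : i<j, μ_i ≠ μ_j} - ℓ(v_μ), where ℓ(v_μ) = #{(i,j) : i < j, μ_i > μ_j}. -/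
open Finset

/-- The box statistic `u_μ(r,c)` for `μ ∈ ℤ_{≥0}^n`:
`u_μ(r,c) = #{r' < r : μ_{r'} < c ≤ μ_r} + #{r' > r : μ_{r'} < c-1 < μ_r}`. -/
def uMu {n : ℕ} (μ : Fin n → ℤ) (r : Fin n) (c : ℤ) : ℕ :=
  (Finset.univ.filter (fun r' : Fin n => r' < r ∧ μ r' < c ∧ c ≤ μ r)).card
  + (Finset.univ.filter (fun r' : Fin n => r < r' ∧ μ r' < c - 1 ∧ c - 1 < μ r)).card

lemma filterA (a b : ℤ) (ha : 0 ≤ a) :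
    ((Finset.Icc (1:ℤ) b).filter (fun c => a < c ∧ c ≤ b)) = Finset.Icc (a+1) b := by
  ext c; simp only [Finset.mem_filter, Finset.mem_Icc]; omega

lemma filterB (a b : ℤ) (ha : 0 ≤ a) :
    ((Finset.Icc (1:ℤ) b).filter (fun c => a < c - 1 ∧ c - 1 < b)) = Finset.Icc (a+2) b := by
  ext c; simp only [Finset.mem_filter, Finset.mem_Icc]; omega

lemma uMu_inner {n : ℕ} (μ : Fin n → ℤ) (hμ : ∀ i, 0 ≤ μ i) (r : Fin n) :
    ∑ c ∈ Finset.Icc (1:ℤ) (μ r), (uMu μ r c : ℤ)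
    = ∑ r' : Fin n, ((if r' < r then ((μ r - μ r').toNat : ℤ) else 0)
        + (if r < r' then ((μ r - μ r' - 1).toNat : ℤ) else 0)) := by
  simp only [uMu, Finset.card_filter, Nat.cast_add, Nat.cast_sum]
  rw [Finset.sum_add_distrib, Finset.sum_comm, Finset.sum_comm
    (s := Finset.Icc (1:ℤ) (μ r)) (t := (Finset.univ : Finset (Fin n))),
    ← Finset.sum_add_distrib]
  refine Finset.sum_congr rfl fun r' _ => ?_
  congr 1
  · by_cases h : r' < r
    · simp only [h, true_and, if_true]
      push_cast
      rw [Finset.sum_boole]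
      rw [show ((Finset.Icc (1:ℤ) (μ r)).filter (fun c => μ r' < c ∧ c ≤ μ r))
          = Finset.Icc (μ r' + 1) (μ r) from filterA _ _ (hμ r')]
      rw [Int.card_Icc]
      have := hμ r'
      omega
    · simp [h]
  · by_cases h : r < r'
    · simp only [h, true_and, if_true]
      push_cast
      rw [Finset.sum_boole,
        show ((Finset.Icc (1:ℤ) (μ r)).filter (fun c => μ r' < c - 1 ∧ c - 1 < μ r))
          = Finset.Icc (μ r' + 2) (μ r) from filterB _ _ (hμ r')]
      rw [Int.card_Icc]
      have := hμ r'
      omega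
    · simp [h]

lemma pair_identity (a b : ℤ) :
    ((b - a).toNat : ℤ) + ((a - b - 1).toNat : ℤ)
      = max (|a - b| - 1) 0 + (if a ≠ b then (1:ℤ) else 0)
        - (if b < a then (1:ℤ) else 0) := by
  rw [max_def]
  rcases abs_cases (a - b) with ⟨h1, h2⟩ | ⟨h1, h2⟩ <;> rw [h1] <;> split_ifs <;> omega

/-- the total number of boxes of `μ` is `|μ| = Σ_r μ_r`, and
`Σ_{(r,c) ∈ μ} u_μ(r,c) = Σ_{i<j} max(|μ_i - μ_j| - 1, 0) + #{(i,j) : i<j, μ_i ≠ μ_j}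
  - #{(i,j) : i<j, μ_i > μ_j}` (the latter being `ℓ(v_μ)`). -/
theorem uMu_total (n : ℕ) (μ : Fin n → ℤ) (hμ : ∀ i, 0 ≤ μ i) :
    (∑ r : Fin n, ((Finset.Icc (1 : ℤ) (μ r)).card : ℤ)) = ∑ r : Fin n, μ r ∧
    (∑ r : Fin n, ∑ c ∈ Finset.Icc (1 : ℤ) (μ r), (uMu μ r c : ℤ))
      = (∑ p ∈ Finset.univ.filter (fun p : Fin n × Fin n => p.1 < p.2),
          max (|μ p.1 - μ p.2| - 1) 0)
        + ((Finset.univ.filter (fun p : Fin n × Fin n => p.1 < p.2 ∧ μ p.1 ≠ μ p.2)).card : ℤ)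
        - ((Finset.univ.filter (fun p : Fin n × Fin n => p.1 < p.2 ∧ μ p.2 < μ p.1)).card : ℤ) := by
  constructor
  · refine Finset.sum_congr rfl fun r _ => ?_
    rw [Int.card_Icc]
    have := hμ r
    omega
  · -- LHS: reduce to a sum over pairs
    have lhs_eq : (∑ r : Fin n, ∑ c ∈ Finset.Icc (1 : ℤ) (μ r), (uMu μ r c : ℤ))
        = ∑ p ∈ Finset.univ.filter (fun p : Fin n × Fin n => p.1 < p.2),
            (((μ p.2 - μ p.1).toNat : ℤ) + ((μ p.1 - μ p.2 - 1).toNat : ℤ)) := by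
      simp only [uMu_inner μ hμ]
      have h1 : (∑ r : Fin n, ∑ r' : Fin n, (if r' < r then ((μ r - μ r').toNat : ℤ) else 0))
          = ∑ r : Fin n, ∑ r' : Fin n, (if r < r' then ((μ r' - μ r).toNat : ℤ) else 0) := by
        exact Finset.sum_comm
      calc ∑ r : Fin n, ∑ r' : Fin n, ((if r' < r then ((μ r - μ r').toNat : ℤ) else 0)
              + (if r < r' then ((μ r - μ r' - 1).toNat : ℤ) else 0))
          = (∑ r : Fin n, ∑ r' : Fin n, (if r' < r then ((μ r - μ r').toNat : ℤ) else 0))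
            + (∑ r : Fin n, ∑ r' : Fin n, (if r < r' then ((μ r - μ r' - 1).toNat : ℤ) else 0)) := by
            simp only [Finset.sum_add_distrib]
        _ = (∑ r : Fin n, ∑ r' : Fin n, (if r < r' then ((μ r' - μ r).toNat : ℤ) else 0))
            + (∑ r : Fin n, ∑ r' : Fin n, (if r < r' then ((μ r - μ r' - 1).toNat : ℤ) else 0)) := by
            rw [h1]
        _ = ∑ r : Fin n, ∑ r' : Fin n, (if r < r' then
              (((μ r' - μ r).toNat : ℤ) + ((μ r - μ r' - 1).toNat : ℤ)) else 0) := by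
            rw [← Finset.sum_add_distrib]
            refine Finset.sum_congr rfl fun i _ => ?_
            rw [← Finset.sum_add_distrib]
            refine Finset.sum_congr rfl fun j _ => ?_
            split_ifs <;> simp
        _ = ∑ p ∈ (Finset.univ ×ˢ Finset.univ : Finset (Fin n × Fin n)), (if p.1 < p.2 then
              (((μ p.2 - μ p.1).toNat : ℤ) + ((μ p.1 - μ p.2 - 1).toNat : ℤ)) else 0) := by
            exact (Finset.sum_product' Finset.univ Finset.univ (fun i j => if i < j then
              (((μ j - μ i).toNat : ℤ) + ((μ i - μ j - 1).toNat : ℤ)) else 0)).symm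
        _ = ∑ p ∈ Finset.univ.filter (fun p : Fin n × Fin n => p.1 < p.2),
              (((μ p.2 - μ p.1).toNat : ℤ) + ((μ p.1 - μ p.2 - 1).toNat : ℤ)) := by
            rw [Finset.sum_filter, Finset.univ_product_univ]
    rw [lhs_eq]
    -- RHS: combine into a single sum over pairs
    have c2 : ((Finset.univ.filter (fun p : Fin n × Fin n => p.1 < p.2 ∧ μ p.1 ≠ μ p.2)).card : ℤ)
        = ∑ p ∈ Finset.univ.filter (fun p : Fin n × Fin n => p.1 < p.2),
            (if μ p.1 ≠ μ p.2 then (1:ℤ) else 0) := by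
      rw [← Finset.filter_filter, Finset.sum_boole]
    have c3 : ((Finset.univ.filter (fun p : Fin n × Fin n => p.1 < p.2 ∧ μ p.2 < μ p.1)).card : ℤ)
        = ∑ p ∈ Finset.univ.filter (fun p : Fin n × Fin n => p.1 < p.2),
            (if μ p.2 < μ p.1 then (1:ℤ) else 0) := by
      rw [← Finset.filter_filter, Finset.sum_boole]
    rw [c2, c3, ← Finset.sum_add_distrib, ← Finset.sum_sub_distrib]
    exact Finset.sum_congr rfl fun p _ => pair_identity (μ p.1) (μ p.2)
end
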